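/- Suppose a : Γ → F satisfies, for all γ ∈ Γ: (γ+1)a(γ) = (γ−2)a(γ−1), γ·a(γ−1) = (γ−3)a(γ−2), and (γ+2)a(γ) = (γ−4)a(γ−2). Then a(γ) = 0 for all γ ∈ Γ. -/

import Mathlib

/-! Evaluating the three recurrences at `γ = δ + 2` gives linear relations between
`x₀ = a δ`, `x₁ = a (δ + 1)` and `x₂ = a (δ + 2)`; eliminating `x₁` and `x₂` uses
`(δ + 4) δ (δ - 1) - (δ - 2)(δ + 2)(δ + 3) = 12` and leaves `12 · a δ = 0`. -/

theorem twelve_mul_eq_zero_of_relations {R : Type*} [CommRing R] {c x₀ x₁ x₂ : R}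
    (hA : (c + 3) * x₂ = c * x₁) (hB : (c + 2) * x₁ = (c - 1) * x₀)
    (hC : (c + 4) * x₂ = (c - 2) * x₀) : 12 * x₀ = 0 := by
  linear_combination (-(c + 4) * (c + 2)) * hA - c * (c + 4) * hB + (c + 3) * (c + 2) * hC

theorem finitely_supported_recurrences_zero
    {F : Type*} [Field F] [CharZero F] (Γ : AddSubgroup F) (h1 : (1 : F) ∈ Γ)
    (a : Γ → F)
    (hA : ∀ γ : Γ, ((γ : F) + 1) * a γ = ((γ : F) - 2) * a (γ - ⟨1, h1⟩))
    (hB : ∀ γ : Γ, (γ : F) * a (γ - ⟨1, h1⟩) = ((γ : F) - 3) * a (γ - ⟨1, h1⟩ - ⟨1, h1⟩))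
    (hC : ∀ γ : Γ, ((γ : F) + 2) * a γ = ((γ : F) - 4) * a (γ - ⟨1, h1⟩ - ⟨1, h1⟩)) :
    ∀ γ : Γ, a γ = 0 := by
  intro δ
  set one : Γ := ⟨1, h1⟩
  have hval : ((δ + one + one : Γ) : F) = δ + 2 := by simp only [one, AddSubgroup.coe_add]; ring
  have A := hA (δ + one + one)
  have B := hB (δ + one + one)
  have C := hC (δ + one + one)
  simp only [add_sub_cancel_right, hval] at A B C
  have h12 := twelve_mul_eq_zero_of_relations (c := (δ : F)) (x₀ := a δ)
    (x₁ := a (δ + one)) (x₂ := a (δ + one + one))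
    (by linear_combination A) (by linear_combination B) (by linear_combination C)
  exact (mul_eq_zero.mp h12).resolve_left (by norm_num)
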